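/- arXiv:1611.02093 — 2 statements merged into one kernel-verified Lean document; each statement's English description precedes it below -/
import Mathlib

section
/- Let H be an n×n real symmetric matrix and u, v two indices, and suppose perfect state transfer occurs from u to v at some time T ∈ ℝ. Call a real number λ a symmetric eigenvalue if H has a real eigenvector x with eigenvalue λ satisfying x(u) = x(v) ≠ 0, and an antisymmetric eigenvalue if H has a real eigenvector y with eigenvalue μ satisfying y(u) = −y(v) ≠ 0. Then for all symmetric eigenvalues λ, λ', λ'', λ''' with λ'' ≠ λ''' and every antisymmetric eigenvalue μ: (λ − λ')/(λ'' − λ''') is rational, and (λ − μ)/(λ'' − λ''') can be written as a/b with a an odd integer and b a nonzero even integer. -/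
open Matrix

/-- Adjacency matrix of the path on `n` vertices. -/
def pathAdj (n : ℕ) : Matrix (Fin n) (Fin n) ℝ :=
  Matrix.of fun j k => if (j : ℕ) + 1 = (k : ℕ) ∨ (k : ℕ) + 1 = (j : ℕ) then 1 else 0

/-- Hamiltonian of the path on `n` vertices with potential `q`. -/
def pathHam (n : ℕ) (q : Fin n → ℝ) : Matrix (Fin n) (Fin n) ℝ :=
  pathAdj n + Matrix.diagonal q

/-- Perfect state transfer from `u` to `v` at time `T` for real Hamiltonian `H`. -/
noncomputable def pst {ι : Type*} [Fintype ι] [DecidableEq ι]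
    (H : Matrix ι ι ℝ) (u v : ι) (T : ℝ) : Prop :=
  ‖(NormedSpace.exp ((Complex.I * (T : ℂ)) • H.map (Complex.ofReal)) u v)‖ = 1

/-!
The evolution `U = exp (i T H)` is unitary, so `‖U u v‖ = 1` forces row `u` of `U` to vanish
off `v`. Applying `U` to a real eigenvector `x` with eigenvalue `c` then gives
`exp (i T c) x u = U u v * x v`; hence `exp (i T λ) = U u v` for every symmetric eigenvalue and
`exp (i T μ) = -U u v` for every antisymmetric one. So `T (λ - λ') ∈ 2πℤ`,
`T (λ - μ) ∈ π + 2πℤ`, and dividing by `T (λ'' - λ''') = 2πm` with `m ≠ 0` gives both ratios.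
-/

open Complex Real

theorem Complex.exp_ofReal_mul_I_eq_exp_ofReal_mul_I_iff {x y : ℝ} :
    cexp (x * I) = cexp (y * I) ↔ ∃ m : ℤ, x = y + m * (2 * π) := by
  rw [← Circle.coe_exp, ← Circle.coe_exp, Circle.ext_iff.symm, Circle.exp_eq_exp]

theorem Complex.exp_ofReal_mul_I_eq_neg_exp_ofReal_mul_I_iff {x y : ℝ} :
    cexp (x * I) = -cexp (y * I) ↔ ∃ m : ℤ, x = y + (2 * m + 1) * π := by
  have : -cexp (y * I) = cexp (↑(y + π) * I) := by
    rw [ofReal_add, add_mul, exp_add, exp_pi_mul_I, mul_neg_one]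
  rw [this, exp_ofReal_mul_I_eq_exp_ofReal_mul_I_iff]
  exact exists_congr fun m => by constructor <;> intro h <;> linarith

namespace Matrix

variable {ι : Type*} [Fintype ι] [DecidableEq ι]

theorem exp_mulVec_of_mulVec_eq_smul {A : Matrix ι ι ℂ} {x : ι → ℂ} {c : ℂ}
    (h : A *ᵥ x = c • x) : NormedSpace.exp A *ᵥ x = cexp c • x := by
  -- `exp` does not depend on the norm; any Banach algebra norm gives the exponential series.
  let _ := Matrix.linftyOpNormedRing (n := ι) (α := ℂ)
  let _ := Matrix.linftyOpNormedAlgebra (n := ι) (R := ℂ) (α := ℂ)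
  have hpow (k : ℕ) : A ^ k *ᵥ x = c ^ k • x := by
    induction k with
    | zero => simp
    | succ k ih => rw [pow_succ', ← mulVec_mulVec, ih, mulVec_smul, h, smul_smul, pow_succ]
  have hsum := (NormedSpace.exp_series_hasSum_exp' (𝕂 := ℂ) A).map (mulVec.addMonoidHomLeft x)
    (continuous_id.matrix_mulVec continuous_const)
  refine hsum.unique ?_
  simp only [Function.comp_def, mulVec.addMonoidHomLeft, AddMonoidHom.coe_mk, ZeroHom.coe_mk,
    smul_mulVec, hpow, smul_smul]
  rw [exp_eq_exp_ℂ]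
  exact (NormedSpace.exp_series_hasSum_exp' (𝕂 := ℂ) c).smul_const x

theorem exp_mem_unitaryGroup_of_mem_skewAdjoint {A : Matrix ι ι ℂ}
    (hA : A ∈ skewAdjoint (Matrix ι ι ℂ)) : NormedSpace.exp A ∈ unitaryGroup ι ℂ := by
  rw [Unitary.mem_iff, star_eq_conjTranspose, ← exp_conjTranspose, ← star_eq_conjTranspose,
    skewAdjoint.mem_iff.mp hA, ← exp_add_of_commute _ _ (Commute.refl A).neg_left,
    ← exp_add_of_commute _ _ (Commute.refl A).neg_right, neg_add_cancel, add_neg_cancel,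
    NormedSpace.exp_zero, and_self]

section Unitary

variable {𝕜 : Type*} [RCLike 𝕜] {U : Matrix ι ι 𝕜}

theorem sum_norm_sq_row_of_mem_unitaryGroup (hU : U ∈ unitaryGroup ι 𝕜) (u : ι) :
    ∑ k, ‖U u k‖ ^ 2 = 1 := by
  have h : (U * star U) u u = 1 := by rw [mem_unitaryGroup_iff.mp hU, one_apply_eq]
  simp only [mul_apply, star_apply, ← starRingEnd_apply, RCLike.mul_conj] at h
  exact_mod_cast h

theorem eq_zero_of_mem_unitaryGroup_of_norm_eq_one (hU : U ∈ unitaryGroup ι 𝕜) {u v : ι}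
    (huv : ‖U u v‖ = 1) {k : ι} (hk : k ≠ v) : U u k = 0 := by
  have hrest : ∑ j ∈ Finset.univ.erase v, ‖U u j‖ ^ 2 = 0 := by
    have := Finset.sum_erase_add _ (fun j => ‖U u j‖ ^ 2) (Finset.mem_univ v)
    rw [sum_norm_sq_row_of_mem_unitaryGroup hU, huv] at this
    linarith
  rw [Finset.sum_eq_zero_iff_of_nonneg fun j _ => by positivity] at hrest
  simpa using hrest k (Finset.mem_erase.mpr ⟨hk, Finset.mem_univ k⟩)

theorem mulVec_apply_of_mem_unitaryGroup_of_norm_eq_one (hU : U ∈ unitaryGroup ι 𝕜) {u v : ι}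
    (huv : ‖U u v‖ = 1) (x : ι → 𝕜) : (U *ᵥ x) u = U u v * x v := by
  refine Finset.sum_eq_single v (fun k _ hk => ?_) (fun h => absurd (Finset.mem_univ v) h)
  simp only [eq_zero_of_mem_unitaryGroup_of_norm_eq_one hU huv hk, zero_mul]

end Unitary

end Matrix

section PerfectStateTransfer

variable {ι : Type*} [Fintype ι] [DecidableEq ι] {H : Matrix ι ι ℝ} {u v : ι} {T : ℝ}

-- `pst H u v T` unfolds to `‖evolution H T u v‖ = 1`.
noncomputable def evolution (H : Matrix ι ι ℝ) (T : ℝ) : Matrix ι ι ℂ :=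
  NormedSpace.exp ((I * T) • H.map ofReal)

theorem evolution_mem_unitaryGroup (hH : H.IsSymm) (T : ℝ) :
    evolution H T ∈ unitaryGroup ι ℂ := by
  refine exp_mem_unitaryGroup_of_mem_skewAdjoint (IsSelfAdjoint.smul_mem_skewAdjoint ?_ ?_)
  · rw [skewAdjoint.mem_iff, star_mul', Complex.star_def, conj_I, conj_ofReal, neg_mul]
  · exact (isHermitian_iff_isSymm.mpr hH).map ofReal fun _ => (conj_ofReal _).symm

theorem evolution_mulVec_of_mulVec_eq_smul {c : ℝ} {x : ι → ℝ} (hx : H *ᵥ x = c • x) :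
    evolution H T *ᵥ (ofReal ∘ x) = cexp (↑(T * c) * I) • (ofReal ∘ x) := by
  refine exp_mulVec_of_mulVec_eq_smul ?_
  have hxc : H.map ofReal *ᵥ (ofReal ∘ x) = (c : ℂ) • (ofReal ∘ x) := by
    ext i
    exact (RingHom.map_mulVec ofRealHom H x i).symm.trans (by simp [hx])
  rw [smul_mulVec, hxc, smul_smul]
  congr 1
  push_cast
  ring

theorem pst.exp_mul_apply_eq (hpst : pst H u v T) (hH : H.IsSymm) {c : ℝ} {x : ι → ℝ}
    (hx : H *ᵥ x = c • x) : cexp (↑(T * c) * I) * x u = evolution H T u v * x v := by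
  have := congrFun (evolution_mulVec_of_mulVec_eq_smul (T := T) hx) u
  rwa [mulVec_apply_of_mem_unitaryGroup_of_norm_eq_one (evolution_mem_unitaryGroup hH T) hpst,
    Pi.smul_apply, smul_eq_mul, eq_comm] at this

theorem pst.exp_eq_of_apply_eq (hpst : pst H u v T) (hH : H.IsSymm) {c : ℝ} {x : ι → ℝ}
    (hx : H *ᵥ x = c • x) (hxuv : x u = x v) (hxu : x u ≠ 0) :
    cexp (↑(T * c) * I) = evolution H T u v := by
  have h := hpst.exp_mul_apply_eq hH hx
  rw [← hxuv] at h
  exact mul_right_cancel₀ (ofReal_ne_zero.mpr hxu) h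

theorem pst.exp_eq_neg_of_apply_eq_neg (hpst : pst H u v T) (hH : H.IsSymm) {c : ℝ}
    {y : ι → ℝ} (hy : H *ᵥ y = c • y) (hyuv : y u = -y v) (hyu : y u ≠ 0) :
    cexp (↑(T * c) * I) = -evolution H T u v := by
  have h := hpst.exp_mul_apply_eq hH hy
  rw [show (y v : ℂ) = -y u by rw [hyuv, ofReal_neg, neg_neg]] at h
  exact mul_right_cancel₀ (ofReal_ne_zero.mpr hyu) (h.trans (by ring))

end PerfectStateTransfer

theorem eigenvalue_ratio_conditions_of_pst_general (n : ℕ) (H : Matrix (Fin n) (Fin n) ℝ)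
    (hH : H.IsSymm) (u v : Fin n) (T : ℝ) (hpst : pst H u v T)
    (lam lam' lam'' lam''' mu : ℝ)
    (h1 : ∃ x : Fin n → ℝ, H.mulVec x = lam • x ∧ x u = x v ∧ x u ≠ 0)
    (h2 : ∃ x : Fin n → ℝ, H.mulVec x = lam' • x ∧ x u = x v ∧ x u ≠ 0)
    (h3 : ∃ x : Fin n → ℝ, H.mulVec x = lam'' • x ∧ x u = x v ∧ x u ≠ 0)
    (h4 : ∃ x : Fin n → ℝ, H.mulVec x = lam''' • x ∧ x u = x v ∧ x u ≠ 0)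
    (hne : lam'' ≠ lam''')
    (hmu : ∃ y : Fin n → ℝ, H.mulVec y = mu • y ∧ y u = - y v ∧ y u ≠ 0) :
    (∃ r : ℚ, (lam - lam') / (lam'' - lam''') = (r : ℝ)) ∧
    (∃ a b : ℤ, Odd a ∧ Even b ∧ b ≠ 0 ∧
      (lam - mu) / (lam'' - lam''') = (a : ℝ) / (b : ℝ)) := by
  have phase (c : ℝ) : (∃ x : Fin n → ℝ, H *ᵥ x = c • x ∧ x u = x v ∧ x u ≠ 0) →
      cexp (↑(T * c) * I) = evolution H T u v :=
    fun ⟨_, hx, hxuv, hxu⟩ => hpst.exp_eq_of_apply_eq hH hx hxuv hxu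
  obtain ⟨y, hy, hyuv, hyu⟩ := hmu
  obtain ⟨k, hk⟩ :=
    exp_ofReal_mul_I_eq_exp_ofReal_mul_I_iff.mp ((phase _ h1).trans (phase _ h2).symm)
  obtain ⟨m, hm⟩ :=
    exp_ofReal_mul_I_eq_exp_ofReal_mul_I_iff.mp ((phase _ h3).trans (phase _ h4).symm)
  obtain ⟨j, hj⟩ := exp_ofReal_mul_I_eq_neg_exp_ofReal_mul_I_iff.mp
    ((phase _ h1).trans (by rw [hpst.exp_eq_neg_of_apply_eq_neg hH hy hyuv hyu, neg_neg]))
  have hT : T ≠ 0 := by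
    rintro rfl
    have : ((2 * j + 1 : ℤ) : ℝ) = 0 := by simpa [pi_ne_zero] using hj
    norm_cast at this
    omega
  have hm0 : (m : ℝ) ≠ 0 := by
    rintro hm0
    exact hne (mul_left_cancel₀ hT (by simpa [hm0] using hm))
  have hd : lam'' - lam''' ≠ 0 := sub_ne_zero.mpr hne
  refine ⟨⟨k / m, ?_⟩, 2 * j + 1, 2 * m, odd_two_mul_add_one j, even_two_mul m,
    mul_ne_zero two_ne_zero (by exact_mod_cast hm0), ?_⟩
  · push_cast
    rw [div_eq_div_iff hd hm0]
    refine mul_left_cancel₀ hT ?_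
    linear_combination (m : ℝ) * hk - (k : ℝ) * hm
  · push_cast
    rw [div_eq_div_iff hd (mul_ne_zero two_ne_zero hm0)]
    refine mul_left_cancel₀ hT ?_
    linear_combination 2 * (m : ℝ) * hj - (2 * j + 1 : ℝ) * hm

/-- ratio conditions on the eigenvalues implied by perfect state transfer. -/
theorem eigenvalue_ratio_conditions_of_pst (n : ℕ) (H : Matrix (Fin n) (Fin n) ℝ)
    (hH : H.IsSymm) (u v : Fin n) (huv : u ≠ v) (T : ℝ) (hpst : pst H u v T)
    (lam lam' lam'' lam''' mu : ℝ)
    (h1 : ∃ x : Fin n → ℝ, H.mulVec x = lam • x ∧ x u = x v ∧ x u ≠ 0)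
    (h2 : ∃ x : Fin n → ℝ, H.mulVec x = lam' • x ∧ x u = x v ∧ x u ≠ 0)
    (h3 : ∃ x : Fin n → ℝ, H.mulVec x = lam'' • x ∧ x u = x v ∧ x u ≠ 0)
    (h4 : ∃ x : Fin n → ℝ, H.mulVec x = lam''' • x ∧ x u = x v ∧ x u ≠ 0)
    (hne : lam'' ≠ lam''')
    (hmu : ∃ y : Fin n → ℝ, H.mulVec y = mu • y ∧ y u = - y v ∧ y u ≠ 0) :
    (∃ r : ℚ, (lam - lam') / (lam'' - lam''') = (r : ℝ)) ∧
    (∃ a b : ℤ, Odd a ∧ Even b ∧ b ≠ 0 ∧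
      (lam - mu) / (lam'' - lam''') = (a : ℝ) / (b : ℝ)) :=
  eigenvalue_ratio_conditions_of_pst_general n H hH u v T hpst lam lam' lam'' lam''' mu h1 h2 h3 h4
    hne hmu
end

section
/- For n ≥ 1 and real numbers Q_1,…,Q_n,Q_{n+1}, let L_{2n+1} = det(x·I_{2n+1} − H_{2n+1}) be the characteristic polynomial of the Hamiltonian H_{2n+1} of the path P_{2n+1} with symmetric potential (Q_1,…,Q_n,Q_{n+1},Q_n,…,Q_1). Then L_{2n+1} = p_n · (p_{n+1} − p_{n−1}), where p_k = p_k(x; Q_1,…,Q_k) for k ≤ n and p_{n+1} = p_{n+1}(x; Q_1,…,Q_n,Q_{n+1}). Moreover, the roots of p_{n+1} − p_{n−1} are eigenvalues of H_{2n+1} admitting eigenvectors f with f(1) = f(2n+1) ≠ 0, and the roots of p_n are eigenvalues admitting eigenvectors f with f(1) = −f(2n+1) ≠ 0. -/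
open Matrix

/-- `p_m(x; Q_1, …, Q_m) = det (x·I − H_m)`, the characteristic polynomial (evaluated at `x`)
of the Hamiltonian of the path on `m` vertices with potential `Q 0, …, Q (m-1)`. -/
noncomputable def pathCharFun (m : ℕ) (Q : ℕ → ℝ) (x : ℝ) : ℝ :=
  (x • (1 : Matrix (Fin m) (Fin m) ℝ) - pathHam m (fun i => Q i.val)).det

/-!
Expanding the determinant along the last row gives the three-term recurrence
`p_{m+2} = (x - q_{m+1}) p_{m+1} - p_m`. Cutting a path on `a + b + 2` vertices after its first
`a + 1` gives `p_{a+b+2} = p_{a+1} r_{b+1} - p_a r'_b`, where `r_{b+1}` and `r'_b` are the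
characteristic functions of its last `b + 1`, resp. `b`, vertices: both sides satisfy the
recurrence in `b`. For `P_{2n+1}` cut after `n` vertices, the symmetry of the potential and the
invariance of `p` under reversing a path turn `r_{n+1}` and `r'_n` into `p_{n+1}` and `p_n`.

For the eigenvectors, `k ↦ p_k(λ)` solves the eigenvalue equation at the first `n` vertices and
its mirror image `k ↦ ε p_{2n-k}(λ)` solves it at the last `n`. The two halves fit together at
the middle vertex iff `p_n = ε p_n` and `p_{n+1} = ε p_{n-1}`, which holds for `ε = 1` at the
roots of `p_{n+1} - p_{n-1}` and for `ε = -1` at the roots of `p_n`.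
-/

theorem eq_of_two_step_recurrence {α : Type*} {u v : ℕ → α} (F : ℕ → α → α → α)
    (hu : ∀ b, u (b + 2) = F b (u b) (u (b + 1))) (hv : ∀ b, v (b + 2) = F b (v b) (v (b + 1)))
    (h0 : u 0 = v 0) (h1 : u 1 = v 1) : u = v := by
  funext b
  induction b using Nat.twoStepInduction with
  | zero => exact h0
  | one => exact h1
  | more b hb hb1 => rw [hu, hv, hb, hb1]

namespace Matrix

theorem det_succ_succ_of_last_row_col {R : Type*} [CommRing R] {m : ℕ}
    (M : Matrix (Fin (m + 2)) (Fin (m + 2)) R)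
    (hrow : ∀ j : Fin m, M (Fin.last _) j.castSucc.castSucc = 0)
    (hcol : ∀ i : Fin m, M i.castSucc.castSucc (Fin.last _) = 0) :
    M.det = M (Fin.last _) (Fin.last _) * (M.submatrix Fin.castSucc Fin.castSucc).det -
      M (Fin.last _) (Fin.last m).castSucc * M (Fin.last m).castSucc (Fin.last _) *
        (M.submatrix (Fin.castSucc ∘ Fin.castSucc) (Fin.castSucc ∘ Fin.castSucc)).det := by
  have hminor : (M.submatrix Fin.castSucc (Fin.last m).castSucc.succAbove).det =
      M (Fin.last m).castSucc (Fin.last _) *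
        (M.submatrix (Fin.castSucc ∘ Fin.castSucc) (Fin.castSucc ∘ Fin.castSucc)).det := by
    rw [det_succ_column _ (Fin.last m), Fin.sum_univ_castSucc]
    simp [hcol, Fin.succAbove_castSucc_of_lt, Function.comp_def]
  rw [det_succ_row M (Fin.last _), Fin.sum_univ_castSucc, Fin.sum_univ_castSucc]
  simp only [Fin.succAbove_last, Fin.val_last, Fin.val_castSucc, hrow, mul_zero, zero_mul,
    Finset.sum_const_zero, zero_add]
  rw [hminor, show m + 1 + m = 2 * m + 1 by ring, show m + 1 + (m + 1) = 2 * (m + 1) by ring,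
    pow_succ, pow_mul, pow_mul]
  norm_num
  ring

end Matrix

theorem pathHam_mulVec_apply {m : ℕ} (q : Fin m → ℝ) (F : ℕ → ℝ) (j : Fin m) :
    (pathHam m q *ᵥ fun k => F k) j =
      (if (j : ℕ) + 1 < m then F (j + 1) else 0) + (if 0 < (j : ℕ) then F (j - 1) else 0) +
        q j * F j := by
  have hadj : ∀ k : Fin m, pathAdj m j k * F k =
      (if (j : ℕ) + 1 = k then F k else 0) + (if (k : ℕ) + 1 = j then F k else 0) := by
    intro k
    by_cases h : (j : ℕ) + 1 = k
    · simp [pathAdj, h, show (k : ℕ) + 1 ≠ j by omega]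
    · simp [pathAdj, h]
  rw [pathHam, add_mulVec, Pi.add_apply, mulVec_diagonal, mulVec, dotProduct,
    Finset.sum_congr rfl fun k _ => hadj k, Finset.sum_add_distrib,
    Fin.sum_univ_eq_sum_range (fun k => if (j : ℕ) + 1 = k then F k else 0),
    Fin.sum_univ_eq_sum_range (fun k => if k + 1 = (j : ℕ) then F k else 0)]
  obtain ⟨_ | i, hi⟩ := j
  · simp
  · simp [show i < m by omega]

noncomputable def pathCharMatrix (m : ℕ) (q : ℕ → ℝ) (x : ℝ) : Matrix (Fin m) (Fin m) ℝ :=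
  x • (1 : Matrix (Fin m) (Fin m) ℝ) - pathHam m (fun i => q i)

theorem pathCharFun_eq_det (m : ℕ) (q : ℕ → ℝ) (x : ℝ) :
    pathCharFun m q x = (pathCharMatrix m q x).det := rfl

theorem pathCharMatrix_apply (m : ℕ) (q : ℕ → ℝ) (x : ℝ) (j k : Fin m) :
    pathCharMatrix m q x j k = (if (j : ℕ) = k then x - q j else 0) -
      (if (j : ℕ) + 1 = k ∨ (k : ℕ) + 1 = j then 1 else 0) := by
  by_cases h : (j : ℕ) = k
  · simp [pathCharMatrix, pathHam, pathAdj, Fin.ext h]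
  · simp [pathCharMatrix, pathHam, pathAdj, one_apply, h, Fin.ext_iff]

theorem pathCharMatrix_apply_of_far {m : ℕ} (q : ℕ → ℝ) (x : ℝ) {j k : Fin m}
    (h : (j : ℕ) + 1 < k ∨ (k : ℕ) + 1 < j) : pathCharMatrix m q x j k = 0 := by
  rw [pathCharMatrix_apply, if_neg (by omega), if_neg (by omega), sub_zero]

theorem pathCharMatrix_submatrix_castSucc (m : ℕ) (q : ℕ → ℝ) (x : ℝ) :
    (pathCharMatrix (m + 1) q x).submatrix Fin.castSucc Fin.castSucc = pathCharMatrix m q x := by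
  ext j k
  simp [pathCharMatrix_apply]

theorem pathCharFun_zero (q : ℕ → ℝ) (x : ℝ) : pathCharFun 0 q x = 1 :=
  det_fin_zero

theorem pathCharFun_one (q : ℕ → ℝ) (x : ℝ) : pathCharFun 1 q x = x - q 0 := by
  simp [pathCharFun_eq_det, pathCharMatrix_apply]

theorem pathCharFun_add_two (m : ℕ) (q : ℕ → ℝ) (x : ℝ) :
    pathCharFun (m + 2) q x = (x - q (m + 1)) * pathCharFun (m + 1) q x - pathCharFun m q x := by
  rw [pathCharFun_eq_det, det_succ_succ_of_last_row_col, ← submatrix_submatrix,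
    pathCharMatrix_submatrix_castSucc, pathCharMatrix_submatrix_castSucc]
  · simp [pathCharMatrix_apply, pathCharFun_eq_det]
  · exact fun j => pathCharMatrix_apply_of_far q x (by simp)
  · exact fun i => pathCharMatrix_apply_of_far q x (by simp)

theorem pathCharFun_succ_add_pred (k : ℕ) (q : ℕ → ℝ) (x : ℝ) :
    pathCharFun (k + 1) q x + (if 0 < k then pathCharFun (k - 1) q x else 0) +
        q k * pathCharFun k q x = x * pathCharFun k q x := by
  rcases k with _ | k
  · simp [pathCharFun_one, pathCharFun_zero]
  · rw [pathCharFun_add_two, if_pos k.succ_pos, Nat.add_sub_cancel]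
    ring

theorem pathCharFun_congr {m : ℕ} {q q' : ℕ → ℝ} (h : ∀ i < m, q i = q' i) (x : ℝ) :
    pathCharFun m q x = pathCharFun m q' x := by
  simp only [pathCharFun_eq_det]
  congr 1
  ext j k
  rw [pathCharMatrix_apply, pathCharMatrix_apply, h j j.isLt]

theorem pathCharFun_reverse (m : ℕ) (q : ℕ → ℝ) (x : ℝ) :
    pathCharFun m (fun i => q (m - 1 - i)) x = pathCharFun m q x := by
  rw [pathCharFun_eq_det, pathCharFun_eq_det, ← det_submatrix_equiv_self Fin.revPerm]
  congr 1
  ext j k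
  simp only [submatrix_apply, pathCharMatrix_apply, Fin.revPerm_apply, Fin.val_rev]
  have := j.isLt
  have := k.isLt
  have hdiag : m - (j + 1) = m - (k + 1) ↔ (j : ℕ) = k := by omega
  have hadj : m - (j + 1) + 1 = m - (k + 1) ∨ m - (k + 1) + 1 = m - (j + 1) ↔
      (j : ℕ) + 1 = k ∨ (k : ℕ) + 1 = j := by omega
  simp only [hdiag, hadj, show m - 1 - (m - (j + 1)) = j by omega]

theorem pathCharFun_add_add_two (a b : ℕ) (q : ℕ → ℝ) (x : ℝ) :
    pathCharFun (a + b + 2) q x =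
      pathCharFun (a + 1) q x * pathCharFun (b + 1) (fun i => q (a + 1 + i)) x -
        pathCharFun a q x * pathCharFun b (fun i => q (a + 2 + i)) x := by
  revert b
  refine congrFun (eq_of_two_step_recurrence (fun b s t => (x - q (a + b + 3)) * t - s)
    (fun b => ?_) (fun b => ?_) ?_ ?_)
  · exact pathCharFun_add_two (a + b + 2) q x
  · rw [pathCharFun_add_two (b + 1) (fun i => q (a + 1 + i)),
      pathCharFun_add_two b (fun i => q (a + 2 + i)),
      show a + 1 + (b + 1 + 1) = a + b + 3 by ring, show a + 2 + (b + 1) = a + b + 3 by ring]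
    ring
  · rw [pathCharFun_add_two, pathCharFun_one, pathCharFun_zero]
    ring
  · rw [pathCharFun_add_two (a + 1), pathCharFun_add_two a, pathCharFun_add_two 0,
      pathCharFun_one, pathCharFun_one, pathCharFun_zero]
    ring

theorem pathCharFun_symmetric_odd (n : ℕ) (hn : 1 ≤ n) (Q : ℕ → ℝ) (x : ℝ) :
    pathCharFun (2 * n + 1) (fun i => Q (min i (2 * n - i))) x =
      pathCharFun n Q x * (pathCharFun (n + 1) Q x - pathCharFun (n - 1) Q x) := by
  obtain ⟨k, rfl⟩ : ∃ k, n = k + 1 := ⟨n - 1, by omega⟩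
  have hfront : ∀ m ≤ k + 1,
      pathCharFun m (fun i => Q (min i (2 * (k + 1) - i))) x = pathCharFun m Q x :=
    fun m hm => pathCharFun_congr (fun i hi => by congr 1; omega) x
  have hback : ∀ a m, k + 1 ≤ a → a + m = 2 * (k + 1) + 1 →
      pathCharFun m (fun i => Q (min (a + i) (2 * (k + 1) - (a + i)))) x = pathCharFun m Q x := by
    intro a m ha ham
    rw [← pathCharFun_reverse m Q]
    exact pathCharFun_congr (fun i hi => by congr 1; omega) x
  have hcut := pathCharFun_add_add_two k (k + 1) (fun i => Q (min i (2 * (k + 1) - i))) x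
  rw [show k + (k + 1) + 2 = 2 * (k + 1) + 1 by ring, hfront _ le_rfl, hfront k (by omega),
    hback _ _ le_rfl (by ring), hback _ _ (by omega) (by ring)] at hcut
  rw [hcut, Nat.add_sub_cancel]
  ring

def reflectAt (n : ℕ) (ε : ℝ) (g : ℕ → ℝ) (k : ℕ) : ℝ :=
  if k ≤ n then g k else ε * g (2 * n - k)

theorem reflectAt_of_le {n k : ℕ} (ε : ℝ) (g : ℕ → ℝ) (hk : k ≤ n) :
    reflectAt n ε g k = g k :=
  if_pos hk

theorem reflectAt_of_ge {n k : ℕ} {ε : ℝ} {g : ℕ → ℝ} (hε : g n = ε * g n) (hk : n ≤ k) :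
    reflectAt n ε g k = ε * g (2 * n - k) := by
  rcases hk.eq_or_lt with rfl | hk
  · rw [reflectAt_of_le ε g le_rfl, hε, Nat.two_mul, Nat.add_sub_cancel]
  · exact if_neg hk.not_ge

theorem pathHam_symmetric_mulVec_reflectAt (n : ℕ) (hn : 1 ≤ n) (Q : ℕ → ℝ) {lam ε : ℝ}
    (hε : pathCharFun n Q lam = ε * pathCharFun n Q lam)
    (hmid : pathCharFun (n + 1) Q lam = ε * pathCharFun (n - 1) Q lam) :
    pathHam (2 * n + 1) (fun i => Q (min (i : ℕ) (2 * n - (i : ℕ)))) *ᵥ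
        (fun j : Fin (2 * n + 1) => reflectAt n ε (fun k => pathCharFun k Q lam) j) =
      lam • fun j : Fin (2 * n + 1) => reflectAt n ε (fun k => pathCharFun k Q lam) j := by
  set g := fun k => pathCharFun k Q lam
  funext ⟨t, ht⟩
  rw [pathHam_mulVec_apply, Pi.smul_apply, smul_eq_mul]
  dsimp only
  rcases lt_trichotomy t n with h | rfl | h
  · rw [if_pos (by omega), reflectAt_of_le ε g (k := t + 1) (by omega),
      reflectAt_of_le ε g (k := t - 1) (by omega), reflectAt_of_le ε g h.le, min_eq_left (by omega)]
    exact pathCharFun_succ_add_pred t Q lam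
  · have hrec := pathCharFun_succ_add_pred t Q lam
    rw [if_pos (by omega), hmid] at hrec
    rw [if_pos (by omega), if_pos (by omega), reflectAt_of_ge hε (k := t + 1) (by omega),
      reflectAt_of_le ε g (k := t - 1) (by omega), reflectAt_of_le ε g le_rfl,
      min_eq_left (by omega), show 2 * t - (t + 1) = t - 1 by omega]
    exact hrec
  · obtain ⟨s, hs, rfl⟩ : ∃ s < n, t = 2 * n - s := ⟨2 * n - t, by omega, by omega⟩
    have hrec := pathCharFun_succ_add_pred s Q lam
    rw [if_pos (show 0 < 2 * n - s by omega), reflectAt_of_ge hε (k := 2 * n - s - 1) (by omega),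
      reflectAt_of_ge hε (k := 2 * n - s) (by omega), min_eq_right (by omega),
      show 2 * n - (2 * n - s - 1) = s + 1 by omega, show 2 * n - (2 * n - s) = s by omega]
    rcases s with _ | s
    · rw [if_neg (by omega)]
      rw [if_neg (by omega)] at hrec
      linear_combination ε * hrec
    · rw [if_pos (by omega), reflectAt_of_ge hε (by omega),
        show 2 * n - (2 * n - (s + 1) + 1) = s by omega]
      rw [if_pos (by omega), Nat.add_sub_cancel] at hrec
      linear_combination ε * hrec

theorem exists_reflected_eigenvector (n : ℕ) (hn : 1 ≤ n) (Q : ℕ → ℝ) {lam ε : ℝ}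
    (hε : pathCharFun n Q lam = ε * pathCharFun n Q lam)
    (hmid : pathCharFun (n + 1) Q lam = ε * pathCharFun (n - 1) Q lam) :
    ∃ f : Fin (2 * n + 1) → ℝ,
      pathHam (2 * n + 1) (fun i => Q (min (i : ℕ) (2 * n - (i : ℕ)))) *ᵥ f = lam • f ∧
        f (Fin.last (2 * n)) = ε * f 0 ∧ f 0 ≠ 0 := by
  refine ⟨_, pathHam_symmetric_mulVec_reflectAt n hn Q hε hmid, ?_, ?_⟩
  · show reflectAt n ε _ (2 * n) = ε * reflectAt n ε _ 0
    rw [reflectAt_of_le ε _ n.zero_le, reflectAt_of_ge hε (by omega), Nat.sub_self]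
  · show reflectAt n ε _ 0 ≠ 0
    rw [reflectAt_of_le ε _ n.zero_le, pathCharFun_zero]
    exact one_ne_zero

/-- factorization of the characteristic polynomial of the path `P_{2n+1}` with
symmetric potential `(Q₁,…,Qₙ,Q_{n+1},Qₙ,…,Q₁)`, together with the symmetry of the
eigenvectors corresponding to the roots of each factor. -/
theorem odd_path_charpoly_factorization (n : ℕ) (hn : 1 ≤ n) (Q : ℕ → ℝ) :
    (∀ x : ℝ,
      (x • (1 : Matrix (Fin (2 * n + 1)) (Fin (2 * n + 1)) ℝ) -
          pathHam (2 * n + 1) (fun i => Q (min (i : ℕ) (2 * n - (i : ℕ))))).det =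
        pathCharFun n Q x * (pathCharFun (n + 1) Q x - pathCharFun (n - 1) Q x)) ∧
    (∀ lam : ℝ, pathCharFun (n + 1) Q lam - pathCharFun (n - 1) Q lam = 0 →
      ∃ f : Fin (2 * n + 1) → ℝ,
        (pathHam (2 * n + 1) (fun i => Q (min (i : ℕ) (2 * n - (i : ℕ))))).mulVec f = lam • f ∧
        f ⟨0, by omega⟩ = f ⟨2 * n, by omega⟩ ∧ f ⟨0, by omega⟩ ≠ 0) ∧
    (∀ lam : ℝ, pathCharFun n Q lam = 0 →
      ∃ f : Fin (2 * n + 1) → ℝ,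
        (pathHam (2 * n + 1) (fun i => Q (min (i : ℕ) (2 * n - (i : ℕ))))).mulVec f = lam • f ∧
        f ⟨0, by omega⟩ = - f ⟨2 * n, by omega⟩ ∧ f ⟨0, by omega⟩ ≠ 0) := by
  refine ⟨pathCharFun_symmetric_odd n hn Q, fun lam hlam => ?_, fun lam hlam => ?_⟩
  · obtain ⟨f, hf, hends, hf0⟩ := exists_reflected_eigenvector n hn Q (ε := 1)
      (one_mul _).symm (by linear_combination hlam)
    exact ⟨f, hf, show f 0 = f (Fin.last _) by linear_combination -hends, hf0⟩
  · have hmid : pathCharFun (n + 1) Q lam = -1 * pathCharFun (n - 1) Q lam := by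
      have hrec := pathCharFun_succ_add_pred n Q lam
      rw [if_pos (by omega), hlam] at hrec
      linear_combination hrec
    obtain ⟨f, hf, hends, hf0⟩ := exists_reflected_eigenvector n hn Q (ε := -1)
      (by rw [hlam, mul_zero]) hmid
    exact ⟨f, hf, show f 0 = -f (Fin.last _) by linear_combination hends, hf0⟩
end
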